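/- Consider misère NimG-RM on a graph G with a loop on every vertex and strictly positive weight function w. If the starting vertex u has weight w(u) ≥ 2, then (G,u,w) is a first-player win. -/

import Mathlib

universe u
mutual
  inductive GNormalWin {α : Type u} (moves : α → α → Prop) : α → Prop
    | step {p q : α} : moves p q → GNormalLose moves q → GNormalWin moves p
  inductive GNormalLose {α : Type u} (moves : α → α → Prop) : α → Prop
    | intro {p : α} : (∀ q, moves p q → GNormalWin moves q) → GNormalLose moves p
end

mutual
  inductive GMisereWin {α : Type u} (moves : α → α → Prop) : α → Prop
    | terminal {p : α} : (∀ q, ¬ moves p q) → GMisereWin moves p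
    | step {p q : α} : moves p q → GMisereLose moves q → GMisereWin moves p
  inductive GMisereLose {α : Type u} (moves : α → α → Prop) : α → Prop
    | intro {p q₀ : α} : moves p q₀ → (∀ q, moves p q → GMisereWin moves q) → GMisereLose moves p
end

def nimMove {V : Type u} (adj : V → V → Prop) (p q : V × (V → ℕ)) : Prop :=
  adj p.1 q.1 ∧ q.2 p.1 < p.2 p.1 ∧ ∀ v, v ≠ p.1 → q.2 v = p.2 v

mutual
  inductive NimRMWin {V : Type u} (adj : V → V → Prop) : V × (V → ℕ) → Prop
    | zero {p} : p.2 p.1 = 0 → NimRMWin adj p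
    | step {p q} : nimMove adj p q → NimRMLose adj q → NimRMWin adj p
  inductive NimRMLose {V : Type u} (adj : V → V → Prop) : V × (V → ℕ) → Prop
    | intro {p} : p.2 p.1 ≠ 0 → (∀ q, nimMove adj p q → NimRMWin adj q) → NimRMLose adj p
end

def vgMove {V : Type u} (A : V → V → Prop) (p q : Set V × V) : Prop :=
  A p.2 q.2 ∧ q.2 ∈ p.1 ∧ q.2 ≠ p.2 ∧ q.1 = p.1 \ {p.2}

def addOut {V : Type u} (A : V → V → Prop) : V ⊕ V → V ⊕ V → Prop
  | .inl a, .inl b => A a b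
  | .inl a, .inr b => a = b
  | _, _ => False

def MaxMatching {V : Type u} (G : SimpleGraph V) (M : G.Subgraph) : Prop :=
  M.IsMatching ∧ ∀ N : G.Subgraph, N.IsMatching → N.edgeSet.ncard ≤ M.edgeSet.ncard

variable {V : Type*} {adj : V → V → Prop}

theorem sum_lt_of_nimMove [Fintype V] {p q : V × (V → ℕ)} (h : nimMove adj p q) :
    ∑ v, q.2 v < ∑ v, p.2 v := by
  refine Finset.sum_lt_sum (fun v _ => ?_) ⟨p.1, Finset.mem_univ _, h.2.1⟩
  by_cases hv : v = p.1
  · exact hv ▸ h.2.1.le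
  · exact (h.2.2 v hv).le

theorem nimRMWin_or_nimRMLose [Fintype V] (p : V × (V → ℕ)) :
    NimRMWin adj p ∨ NimRMLose adj p := by
  induction hs : ∑ v, p.2 v using Nat.strong_induction_on generalizing p with
  | _ s ih =>
    by_cases h0 : p.2 p.1 = 0
    · exact .inl (.zero h0)
    by_cases hwin : ∃ q, nimMove adj p q ∧ NimRMLose adj q
    · obtain ⟨q, hq, hlose⟩ := hwin
      exact .inl (.step hq hlose)
    push Not at hwin
    refine .inr (.intro h0 fun q hq => ?_)
    exact (ih _ (hs ▸ sum_lt_of_nimMove hq) q rfl).resolve_right (hwin q hq)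

theorem nimMove_update_self [DecidableEq V] {u : V} {w : V → ℕ} {k : ℕ} (hloop : adj u u)
    (hk : k < w u) : nimMove adj (u, w) (u, Function.update w u k) :=
  ⟨hloop, by simpa using hk, fun _ hv => Function.update_of_ne hv _ _⟩

theorem nimMove_of_nimMove_update [DecidableEq V] {u : V} {w : V → ℕ} {k : ℕ}
    {q : V × (V → ℕ)} (hq : nimMove adj (u, Function.update w u k) q) (hk : k ≤ w u) :
    nimMove adj (u, w) q := by
  obtain ⟨hadj, hlt, heq⟩ := hq
  refine ⟨hadj, ?_, fun v hv => ?_⟩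
  · simp only [Function.update_self] at hlt
    exact hlt.trans_le hk
  · simpa [Function.update_of_ne hv] using heq v hv

/- Strategy stealing: if no move from `(u, w)` reaches a losing position, reducing `w u` to `1`
and staying on `u` leaves the opponent only moves that were already available from `(u, w)`. -/
theorem nimRMWin_of_adj_self [Fintype V] {u : V} {w : V → ℕ} (hloop : adj u u)
    (h2 : 2 ≤ w u) : NimRMWin adj (u, w) := by
  classical
  by_cases hwin : ∃ q, nimMove adj (u, w) q ∧ NimRMLose adj q
  · obtain ⟨q, hq, hlose⟩ := hwin
    exact .step hq hlose
  push Not at hwin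
  refine .step (nimMove_update_self (k := 1) hloop h2) (.intro (by simp) fun q hq => ?_)
  have hq' := nimMove_of_nimMove_update hq (by omega)
  exact (nimRMWin_or_nimRMLose q).resolve_right (hwin q hq')

/-- Misère NimG-RM with a loop on every vertex and positive weights: if the starting vertex
has weight at least 2, the first player wins. -/
theorem stmt5 {V : Type} [Fintype V] (G : SimpleGraph V) (w : V → ℕ) (hw : ∀ v, 0 < w v)
    (u : V) (h2 : 2 ≤ w u) :
    NimRMWin (fun a b => G.Adj a b ∨ a = b) (u, w) :=
  nimRMWin_of_adj_self (Or.inr rfl) h2
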